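/- arXiv:2005.13686 — 4 statements merged into one kernel-verified Lean document; each statement's English description precedes it below -/
import Mathlib

section
/- Let M1 be the number of lattice paths in Cat(n) (paths from (0,0) to (n,n) weakly above the diagonal) containing the horizontal segment from (x-2,h) to (x,h), and M2 the number containing the vertical segment from (x-1,h-1) to (x-1,h+1), where x := h+1-z with 1 ≤ z ≤ h-1 and 1 ≤ h ≤ n-1. Then M2 - M1 = C(x+h-2, x-1) · C(2n-x-h, n-h-1) · (h-x+1)(h-x+2)(h-x+3)(n-x-h+1) / (h(h+1)(n-h)(n-x+2)). -/
open Finset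

/-- Number of steps equal to `v` among the first `i` steps of `f`
(`false` = right-step, `true` = up-step). -/
def pref {m : ℕ} (f : Fin m → Bool) (i : ℕ) (v : Bool) : ℕ :=
  (univ.filter (fun j : Fin m => (j : ℕ) < i ∧ f j = v)).card

/-- `f` encodes a lattice path from `(0,0)` to `(a,b)` (with `false` = right-step,
`true` = up-step) that stays weakly above the diagonal `y = x`. -/
def IsPath (a b : ℕ) (f : Fin (a + b) → Bool) : Prop :=
  pref f (a + b) false = a ∧ ∀ i ≤ a + b, pref f i false ≤ pref f i true

instance (a b : ℕ) : DecidablePred (IsPath a b) := fun f => by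
  unfold IsPath; exact inferInstance

/-- The number of lattice paths from `(0,0)` to `(a,b)` staying weakly above `y = x`. -/
def pathCount (a b : ℕ) : ℕ := (univ.filter (IsPath a b)).card

/-- The number of paths in `Cat(n)` containing the horizontal segment
`(x-2,h) → (x,h)`, i.e. passing through `(x-2,h)`, `(x-1,h)`, `(x,h)`. -/
def Mone (n x h : ℕ) : ℕ :=
  (univ.filter (fun f : Fin (n + n) → Bool => IsPath n n f ∧
    pref f (x + h - 2) false = x - 2 ∧ pref f (x + h - 1) false = x - 1 ∧
    pref f (x + h) false = x)).card

/-- The number of paths in `Cat(n)` containing the vertical segment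
`(x-1,h-1) → (x-1,h+1)`, i.e. passing through `(x-1,h-1)`, `(x-1,h)`, `(x-1,h+1)`. -/
def Mtwo (n x h : ℕ) : ℕ :=
  (univ.filter (fun f : Fin (n + n) → Bool => IsPath n n f ∧
    pref f (x + h - 2) false = x - 1 ∧ pref f (x + h - 1) false = x - 1 ∧
    pref f (x + h) false = x - 1)).card

/-!
Cut a path of `Cat(n)` through the segment at the segment's first and last points: it becomes a
path to the first point, two forced steps, and a path from the last point. Re-rooted at that
point, the last piece is again a ballot path whose barrier is shifted by the point's distance
to the diagonal, so `M1` and `M2` are products of two ballot numbers. These are given in closed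
form by the reflection principle, and the identity reduces to rational-function algebra in the
binomials `C(x+h-2, x-1)` and `C(2n-x-h, n-h)`.
-/

def Ballot (c : ℕ) {m : ℕ} (f : Fin m → Bool) : Prop :=
  ∀ i ≤ m, pref f i false ≤ pref f i true + c

instance (c m : ℕ) : DecidablePred (Ballot c (m := m)) := fun f => by
  unfold Ballot; exact inferInstance

-- `ballotCount (a + b) a 0` is the ballot number `f(a, b)`; a positive `c` moves the barrier
-- `c` units to the right of the diagonal.
def ballotCount (m a c : ℕ) : ℕ := #{f : Fin m → Bool | pref f m false = a ∧ Ballot c f}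

section Pref

variable {m : ℕ}

theorem pref_le (f : Fin m → Bool) (i : ℕ) (v : Bool) : pref f i v ≤ i := by
  calc pref f i v ≤ #{j : Fin m | (j : ℕ) < i} := card_le_card fun j => by simp_all
    _ = min m i := Fin.card_filter_val_lt
    _ ≤ i := min_le_right m i

theorem pref_mono (f : Fin m → Bool) (v : Bool) {i i' : ℕ} (h : i ≤ i') :
    pref f i v ≤ pref f i' v :=
  card_le_card fun j hj => by
    simp only [mem_filter, mem_univ, true_and] at hj ⊢
    exact ⟨by omega, hj.2⟩

theorem pref_succ_le (f : Fin m → Bool) (i : ℕ) (v : Bool) :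
    pref f (i + 1) v ≤ pref f i v + 1 := by
  refine (card_le_card_sdiff_add_card (t := {j : Fin m | (j : ℕ) < i ∧ f j = v})).trans ?_
  rw [add_comm]
  refine add_le_add le_rfl (card_le_one.2 fun j hj j' hj' => Fin.ext ?_)
  simp only [mem_sdiff, mem_filter, mem_univ, true_and] at hj hj'
  grind

theorem pref_of_le (f : Fin m → Bool) {i : ℕ} (hi : m ≤ i) (v : Bool) :
    pref f i v = pref f m v := by
  unfold pref
  congr 1
  ext j
  simp only [mem_filter, mem_univ, true_and]
  exact and_congr_left' ⟨fun _ => j.isLt, fun _ => by omega⟩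

theorem pref_false_add_pref_true (f : Fin m → Bool) {i : ℕ} (hi : i ≤ m) :
    pref f i false + pref f i true = i := by
  have := card_filter_add_card_filter_not (s := {j : Fin m | (j : ℕ) < i}) (fun j => f j = false)
  rw [filter_filter, filter_filter, Fin.card_filter_val_lt, min_eq_right hi] at this
  simpa [pref] using this

theorem pref_self_eq_zero_iff (f : Fin m → Bool) (v : Bool) :
    pref f m v = 0 ↔ ∀ j, f j ≠ v := by
  simp [pref, filter_eq_empty_iff]

end Pref

theorem ballotCount_all_up (m c : ℕ) : ballotCount m 0 c = 1 := by
  rw [ballotCount, card_eq_one]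
  refine ⟨fun _ => true, eq_singleton_iff_unique_mem.2 ⟨?_, fun f hf => ?_⟩⟩
  · simp [Ballot, pref]
  · simp only [mem_filter, mem_univ, true_and, pref_self_eq_zero_iff] at hf
    funext j
    simpa using hf.1 j

theorem ballotCount_all_right {m c : ℕ} (h : m ≤ c) : ballotCount m m c = 1 := by
  have hall (f : Fin m → Bool) : pref f m false = m ↔ ∀ j, f j ≠ true := by
    rw [← pref_self_eq_zero_iff]
    have := pref_false_add_pref_true f le_rfl
    omega
  rw [ballotCount, card_eq_one]
  refine ⟨fun _ => false, eq_singleton_iff_unique_mem.2 ⟨?_, fun f hf => ?_⟩⟩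
  · simp only [mem_filter, mem_univ, true_and, hall]
    exact ⟨by simp, fun i _ => (pref_le _ i false).trans (by omega)⟩
  · simp only [mem_filter, mem_univ, true_and, hall] at hf
    funext j
    simpa using hf.1 j

section Append

variable {k l : ℕ}

theorem pref_append (f : Fin (k + l) → Bool) (i : ℕ) (v : Bool) :
    pref f i v = pref (fun j => f (Fin.castAdd l j)) i v +
      pref (fun j => f (Fin.natAdd k j)) (i - k) v := by
  simp only [pref, card_filter, Fin.sum_univ_add, Fin.val_castAdd, Fin.val_natAdd]
  congr 1
  refine sum_congr rfl fun j _ => ?_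
  exact if_congr (and_congr_left' (by omega)) rfl rfl

theorem pref_append_of_le (f : Fin (k + l) → Bool) {i : ℕ} (hi : i ≤ k) (v : Bool) :
    pref f i v = pref (fun j => f (Fin.castAdd l j)) i v := by
  rw [pref_append f i, Nat.sub_eq_zero_of_le hi]
  simp [pref]

theorem pref_append_add (f : Fin (k + l) → Bool) (i : ℕ) (v : Bool) :
    pref f (k + i) v = pref f k v + pref (fun j => f (Fin.natAdd k j)) i v := by
  rw [pref_append f (k + i), pref_append_of_le f le_rfl,
    pref_of_le _ (Nat.le_add_right k i), Nat.add_sub_cancel_left]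

theorem card_filter_append (P : (Fin k → Bool) → Prop) (Q : (Fin l → Bool) → Prop)
    [DecidablePred P] [DecidablePred Q] :
    #{f : Fin (k + l) → Bool |
        P (fun j => f (Fin.castAdd l j)) ∧ Q (fun j => f (Fin.natAdd k j))} =
      #{u | P u} * #{w | Q w} := by
  rw [← card_product]
  exact card_equiv (Fin.appendEquiv k l).symm (by simp)

theorem ballot_append_iff {p c c' : ℕ} (f : Fin (k + l) → Bool) (hp : pref f k false = p)
    (hc : k + c = 2 * p + c') :
    Ballot c f ↔
      Ballot c (fun j => f (Fin.castAdd l j)) ∧ Ballot c' (fun j => f (Fin.natAdd k j)) := by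
  have hk := pref_false_add_pref_true f (Nat.le_add_right k l)
  constructor
  · intro hf
    refine ⟨fun i hi => ?_, fun i hi => ?_⟩
    · rw [← pref_append_of_le f hi, ← pref_append_of_le f hi]
      exact hf i (by omega)
    · have := hf (k + i) (by omega)
      rw [pref_append_add, pref_append_add] at this
      omega
  · rintro ⟨hL, hR⟩ i hi
    rcases le_or_gt i k with hik | hki
    · rw [pref_append_of_le f hik, pref_append_of_le f hik]
      exact hL i hik
    · obtain ⟨j, rfl⟩ : ∃ j, i = k + j := ⟨i - k, by omega⟩
      have := hR j (by omega)
      rw [pref_append_add, pref_append_add]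
      omega

theorem card_ballot_append {p c c' : ℕ} (hc : k + c = 2 * p + c') (Q : (Fin l → Bool) → Prop)
    [DecidablePred Q] :
    #{f : Fin (k + l) → Bool |
        pref f k false = p ∧ Ballot c f ∧ Q (fun j => f (Fin.natAdd k j))} =
      ballotCount k p c * #{g | Q g ∧ Ballot c' g} := by
  rw [ballotCount, ← card_filter_append]
  congr 1
  refine filter_congr fun f _ => ?_
  rw [← pref_append_of_le f le_rfl]
  constructor
  · rintro ⟨hp, hf, hQ⟩
    obtain ⟨hL, hR⟩ := (ballot_append_iff f hp hc).1 hf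
    exact ⟨⟨hp, hL⟩, hQ, hR⟩
  · rintro ⟨⟨hp, hL⟩, hQ, hR⟩
    exact ⟨hp, (ballot_append_iff f hp hc).2 ⟨hL, hR⟩, hQ⟩

theorem card_ballot_through {m a p q c c' : ℕ} (hm : k + l = m) (ha : p + q = a)
    (hc : k + c = 2 * p + c') :
    #{f : Fin m → Bool | pref f m false = a ∧ pref f k false = p ∧ Ballot c f} =
      ballotCount k p c * ballotCount l q c' := by
  subst hm ha
  change _ = _ * #{g : Fin l → Bool | pref g l false = q ∧ Ballot c' g}
  rw [← card_ballot_append hc]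
  congr 1
  refine filter_congr fun f _ => ?_
  rw [pref_append_add]
  constructor
  · rintro ⟨ha, hp, hf⟩
    exact ⟨hp, hf, by omega⟩
  · rintro ⟨hp, hf, hq⟩
    exact ⟨by omega, hp, hf⟩

end Append

theorem card_ballot_through_two_steps {m a K r p t q c c' c'' : ℕ} (hm : K + (2 + r) = m)
    (ha : p + (t + q) = a) (hc : K + c = 2 * p + c') (hc' : 2 + c' = 2 * t + c'') :
    #{f : Fin m → Bool | pref f m false = a ∧ pref f K false = p ∧
        pref f (K + 2) false = p + t ∧ Ballot c f} =
      ballotCount K p c * ballotCount 2 t c' * ballotCount r q c'' := by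
  subst hm ha
  have hright : #{g : Fin (2 + r) → Bool |
      (pref g (2 + r) false = t + q ∧ pref g 2 false = t) ∧ Ballot c' g} =
      ballotCount 2 t c' * ballotCount r q c'' := by
    simpa only [and_assoc] using card_ballot_through rfl rfl hc'
  rw [mul_assoc, ← hright, ← card_ballot_append hc]
  congr 1
  refine filter_congr fun f _ => ?_
  rw [pref_append_add f (2 + r), pref_append_add f 2]
  constructor
  · rintro ⟨ha, hp, ht, hf⟩
    exact ⟨hp, hf, by omega, by omega⟩
  · rintro ⟨hp, hf, ha, ht⟩
    exact ⟨by omega, hp, by omega, hf⟩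

theorem Mone_eq {n x h : ℕ} (hx : 2 ≤ x) (hxh : x ≤ h) (hhn : h ≤ n) :
    Mone n x h = ballotCount (x + h - 2) (x - 2) 0 *
      ballotCount (n + n - (x + h)) (n - x) (h - x) := by
  have hpath : Mone n x h = #{f : Fin (n + n) → Bool | pref f (n + n) false = n ∧
      pref f (x + h - 2) false = x - 2 ∧ pref f (x + h - 2 + 2) false = x - 2 + 2 ∧
      Ballot 0 f} := by
    unfold Mone
    congr 1
    refine filter_congr fun f _ => ?_
    have h1 := pref_succ_le f (x + h - 2) false
    have h2 := pref_succ_le f (x + h - 1) false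
    rw [show x + h - 2 + 1 = x + h - 1 by omega] at h1
    rw [show x + h - 1 + 1 = x + h by omega] at h2
    rw [show x + h - 2 + 2 = x + h by omega, show x - 2 + 2 = x by omega]
    simp only [IsPath, Ballot, add_zero]
    constructor
    · rintro ⟨⟨hn, hf⟩, hp, -, hp'⟩
      exact ⟨hn, hp, hp', hf⟩
    · rintro ⟨hn, hp, hp', hf⟩
      exact ⟨⟨hn, hf⟩, hp, by omega, hp'⟩
  rw [hpath, card_ballot_through_two_steps (r := n + n - (x + h)) (q := n - x) (c' := h - x + 2)
    (c'' := h - x) (by omega) (by omega) (by omega) (by omega), ballotCount_all_right (by omega),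
    mul_one]

theorem Mtwo_eq {n x h : ℕ} (hx : 1 ≤ x) (hxh : x ≤ h) (hhn : h ≤ n) :
    Mtwo n x h = ballotCount (x + h - 2) (x - 1) 0 *
      ballotCount (n + n - (x + h)) (n + 1 - x) (h + 2 - x) := by
  have hpath : Mtwo n x h = #{f : Fin (n + n) → Bool | pref f (n + n) false = n ∧
      pref f (x + h - 2) false = x - 1 ∧ pref f (x + h - 2 + 2) false = x - 1 + 0 ∧
      Ballot 0 f} := by
    unfold Mtwo
    congr 1
    refine filter_congr fun f _ => ?_
    have h1 := pref_mono f false (show x + h - 2 ≤ x + h - 1 by omega)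
    have h2 := pref_mono f false (show x + h - 1 ≤ x + h by omega)
    rw [show x + h - 2 + 2 = x + h by omega, add_zero]
    simp only [IsPath, Ballot, add_zero]
    constructor
    · rintro ⟨⟨hn, hf⟩, hp, -, hp'⟩
      exact ⟨hn, hp, hp', hf⟩
    · rintro ⟨hn, hp, hp', hf⟩
      exact ⟨⟨hn, hf⟩, hp, by omega, hp'⟩
  rw [hpath, card_ballot_through_two_steps (r := n + n - (x + h)) (q := n + 1 - x) (c' := h - x)
    (c'' := h + 2 - x) (by omega) (by omega) (by omega) (by omega), ballotCount_all_up, mul_one]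

theorem ballotCount_succ (m a c : ℕ) :
    ballotCount (m + 1) a c = ballotCount m a (c + 1) +
      #{f : Fin (m + 1) → Bool |
        pref f (m + 1) false = a ∧ pref f 1 false = 1 ∧ Ballot c f} := by
  have hup := card_ballot_through (k := 1) (l := m) (m := m + 1) (a := a) (p := 0) (q := a)
    (c := c) (c' := c + 1) (by omega) (by omega) (by omega)
  rw [ballotCount_all_up, one_mul] at hup
  rw [ballotCount, ← hup, ← card_filter_add_card_filter_not (fun f => pref f 1 false = 0),
    filter_filter, filter_filter]
  have h1 (f : Fin (m + 1) → Bool) : pref f 1 false ≠ 0 ↔ pref f 1 false = 1 := by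
    have := pref_le f 1 false
    omega
  congr 2 <;> refine filter_congr fun f _ => ?_
  · tauto
  · rw [← h1 f]
    tauto

theorem ballotCount_succ_succ_zero (m a : ℕ) :
    ballotCount (m + 1) (a + 1) 0 = ballotCount m (a + 1) 1 := by
  rw [ballotCount_succ, add_eq_left, card_eq_zero, filter_eq_empty_iff]
  rintro f - ⟨-, h1, hf⟩
  have := hf 1 (by omega)
  have := pref_false_add_pref_true f (show 1 ≤ m + 1 by omega)
  omega

theorem ballotCount_succ_succ_succ (m a c : ℕ) :
    ballotCount (m + 1) (a + 1) (c + 1) = ballotCount m a c + ballotCount m (a + 1) (c + 2) := by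
  rw [ballotCount_succ, card_ballot_through (k := 1) (l := m) (p := 1) (q := a) (c' := c)
    (by omega) (by omega) (by omega), ballotCount_all_right (by omega), one_mul, add_comm]

-- `C(a+b, b+c+1)` counts, by reflection, the paths that cross the barrier.
theorem ballotCount_add_choose (a b c : ℕ) (h : a ≤ b + c) :
    ballotCount (a + b) a c + (a + b).choose (b + c + 1) = (a + b).choose a := by
  match a, b, c with
  | 0, b, c => simp [ballotCount_all_up, Nat.choose_eq_zero_of_lt]
  | a + 1, 0, c =>
    rw [add_zero, ballotCount_all_right (by omega), Nat.choose_eq_zero_of_lt (by omega),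
      Nat.choose_self]
  | a + 1, b + 1, 0 =>
    have ih := ballotCount_add_choose (a + 1) b 1 (by omega)
    have hsymm : (a + 1 + b).choose (b + 1) = (a + 1 + b).choose a := by
      rw [show a + 1 + b = a + (b + 1) by omega, Nat.choose_symm_add]
    rw [show a + 1 + (b + 1) = a + 1 + b + 1 by omega, ballotCount_succ_succ_zero,
      Nat.choose_succ_succ', Nat.choose_succ_succ' _ a]
    omega
  | a + 1, b + 1, c + 1 =>
    have ih₁ := ballotCount_add_choose a (b + 1) c (by omega)
    have ih₂ := ballotCount_add_choose (a + 1) b (c + 2) (by omega)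
    rw [show a + (b + 1) = a + 1 + b by omega, show b + 1 + c + 1 = b + c + 2 by omega] at ih₁
    rw [show a + 1 + (b + 1) = a + 1 + b + 1 by omega, ballotCount_succ_succ_succ,
      show b + 1 + (c + 1) + 1 = b + c + 2 + 1 by omega, Nat.choose_succ_succ',
      Nat.choose_succ_succ' _ a]
    rw [show b + (c + 2) + 1 = b + c + 2 + 1 by omega] at ih₂
    omega
termination_by a + b

theorem cast_ballotCount_diagonal {m a b : ℕ} (hm : a + b = m) (h : a ≤ b) :
    (ballotCount m a 0 : ℚ) = m.choose a * (b + 1 - a) / (b + 1) := by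
  subst hm
  have hclosed := ballotCount_add_choose a b 0 (by omega)
  have hsucc := Nat.choose_succ_right_eq (a + b) b
  rw [Nat.add_sub_cancel, ← Nat.choose_symm_add] at hsucc
  rw [eq_div_iff (by positivity)]
  have hclosed' : (ballotCount (a + b) a 0 : ℚ) + (a + b).choose (b + 1) = (a + b).choose a := by
    exact_mod_cast hclosed
  have hsucc' : ((a + b).choose (b + 1) : ℚ) * (b + 1) = (a + b).choose a * a := by
    exact_mod_cast hsucc
  linear_combination (b + 1 : ℚ) * hclosed' - hsucc'

theorem cast_ballotCount_end_on_barrier {m a b c : ℕ} (ha : b + c = a) (hm : a + b = m) :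
    (ballotCount m a c : ℚ) = m.choose b * (c + 1) / (a + 1) := by
  subst ha hm
  have hclosed := ballotCount_add_choose (b + c) b c le_rfl
  have hsucc := Nat.choose_succ_right_eq (b + c + b) (b + c)
  rw [Nat.add_sub_cancel_left, Nat.choose_symm_add] at hsucc
  rw [Nat.choose_symm_add] at hclosed
  rw [eq_div_iff (by positivity)]
  have hclosed' : (ballotCount (b + c + b) (b + c) c : ℚ) + (b + c + b).choose (b + c + 1) =
      (b + c + b).choose b := by
    exact_mod_cast hclosed
  have hsucc' :
      ((b + c + b).choose (b + c + 1) : ℚ) * (b + c + 1) = (b + c + b).choose b * b := by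
    exact_mod_cast hsucc
  push_cast
  linear_combination ((b : ℚ) + c + 1) * hclosed' - hsucc'

theorem cast_choose_eq_choose_succ {n m k : ℕ} (hn : k + m + 1 = n) :
    (n.choose k : ℚ) = n.choose (k + 1) * (k + 1) / (m + 1) := by
  subst hn
  have h := Nat.choose_succ_right_eq (k + m + 1) k
  rw [show k + m + 1 - k = m + 1 by omega] at h
  rw [eq_div_iff (by positivity)]
  exact_mod_cast h.symm

theorem cast_Mone_eq (a d e : ℕ) :
    (Mone (a + d + e + 3) (a + 2) (a + 2 + d) : ℚ) =
      (2 * a + d + 2).choose a * (d + 3) / (a + d + 3) *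
        ((d + 2 * e + 2).choose (e + 1) * (d + 1) / (d + e + 2)) := by
  rw [Mone_eq (by omega) (by omega) (by omega),
    show a + 2 + (a + 2 + d) - 2 = 2 * a + d + 2 by omega, show a + 2 - 2 = a by omega,
    show a + d + e + 3 + (a + d + e + 3) - (a + 2 + (a + 2 + d)) = d + 2 * e + 2 by omega,
    show a + d + e + 3 - (a + 2) = d + e + 1 by omega, show a + 2 + d - (a + 2) = d by omega]
  push_cast
  rw [cast_ballotCount_diagonal (show a + (a + 2 + d) = 2 * a + d + 2 by omega) (by omega),
    cast_ballotCount_end_on_barrier (show e + 1 + d = d + e + 1 by omega)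
      (show d + e + 1 + (e + 1) = d + 2 * e + 2 by omega)]
  push_cast
  ring

theorem cast_Mtwo_eq (a d e : ℕ) :
    (Mtwo (a + d + e + 3) (a + 2) (a + 2 + d) : ℚ) =
      (2 * a + d + 2).choose (a + 1) * (d + 1) / (a + d + 2) *
        ((d + 2 * e + 2).choose e * (d + 3) / (d + e + 3)) := by
  rw [Mtwo_eq (by omega) (by omega) (by omega),
    show a + 2 + (a + 2 + d) - 2 = 2 * a + d + 2 by omega, show a + 2 - 1 = a + 1 by omega,
    show a + d + e + 3 + (a + d + e + 3) - (a + 2 + (a + 2 + d)) = d + 2 * e + 2 by omega,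
    show a + d + e + 3 + 1 - (a + 2) = d + e + 2 by omega,
    show a + 2 + d + 2 - (a + 2) = d + 2 by omega]
  push_cast
  rw [cast_ballotCount_diagonal (show a + 1 + (a + 1 + d) = 2 * a + d + 2 by omega) (by omega),
    cast_ballotCount_end_on_barrier (show e + (d + 2) = d + e + 2 by omega)
      (show d + e + 2 + e = d + 2 * e + 2 by omega)]
  push_cast
  ring

theorem stmt4_general (n h z x : ℕ) (hx : x = h + 1 - z) (hz : 1 ≤ z) (hzh : z ≤ h - 1)
    (hhn : h ≤ n - 1) :
    (Mtwo n x h : ℚ) - (Mone n x h : ℚ) =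
      ((x + h - 2).choose (x - 1) : ℚ) * ((2 * n - x - h).choose (n - h - 1) : ℚ) *
        (((h : ℚ) - x + 1) * ((h : ℚ) - x + 2) * ((h : ℚ) - x + 3) *
          ((n : ℚ) - x - h + 1)) /
        ((h : ℚ) * ((h : ℚ) + 1) * ((n : ℚ) - h) * ((n : ℚ) - x + 2)) := by
  obtain ⟨a, d, e, rfl, rfl, rfl⟩ :
      ∃ a d e, x = a + 2 ∧ h = a + 2 + d ∧ n = a + d + e + 3 :=
    ⟨x - 2, h - x, n - h - 1, by omega, by omega, by omega⟩
  rw [cast_Mtwo_eq, cast_Mone_eq,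
    show a + 2 + (a + 2 + d) - 2 = 2 * a + d + 2 by omega, show a + 2 - 1 = a + 1 by omega,
    show 2 * (a + d + e + 3) - (a + 2) - (a + 2 + d) = d + 2 * e + 2 by omega,
    show a + d + e + 3 - (a + 2 + d) - 1 = e by omega,
    cast_choose_eq_choose_succ (show a + (a + d + 1) + 1 = 2 * a + d + 2 by omega),
    cast_choose_eq_choose_succ (show e + (d + e + 1) + 1 = d + 2 * e + 2 by omega)]
  push_cast
  rw [show (a : ℚ) + d + e + 3 - (a + 2 + d) = e + 1 by ring,
    show (a : ℚ) + d + e + 3 - (a + 2) + 2 = d + e + 3 by ring]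
  field_simp
  ring

/-- With `x = h+1-z`, `1 ≤ z ≤ h-1`, `1 ≤ h ≤ n-1`:
`M2 - M1 = C(x+h-2,x-1) C(2n-x-h,n-h-1) (h-x+1)(h-x+2)(h-x+3)(n-x-h+1) / (h(h+1)(n-h)(n-x+2))`. -/
theorem stmt4 (n h z x : ℕ) (hx : x = h + 1 - z) (hz : 1 ≤ z) (hzh : z ≤ h - 1)
    (hh : 1 ≤ h) (hhn : h ≤ n - 1) (hn : 1 ≤ n) :
    (Mtwo n x h : ℚ) - (Mone n x h : ℚ) =
      ((x + h - 2).choose (x - 1) : ℚ) * ((2 * n - x - h).choose (n - h - 1) : ℚ) *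
        (((h : ℚ) - x + 1) * ((h : ℚ) - x + 2) * ((h : ℚ) - x + 3) *
          ((n : ℚ) - x - h + 1)) /
        ((h : ℚ) * ((h : ℚ) + 1) * ((n : ℚ) - h) * ((n : ℚ) - x + 2)) :=
  stmt4_general n h z x hx hz hzh hhn
end

section
/- With x = h+1-z, 1 ≤ z ≤ h-1, 1 ≤ h ≤ n-1, the quantity M2 - M1 (as defined via the products of ballot numbers M2 = f(x-1,h-1)·f(n-h-1,n-x+1) and M1 = f(x-2,h)·f(n-h,n-x)) is nonnegative if and only if h + x ≤ n + 1, equivalently h ≤ (n+z)/2 (when h+x ≠ n+1 strict positivity holds iff h+x < n+1 and the binomials are nonzero). -/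
open Finset
/-- The ballot number `f(a,b) = C(a+b,a) - C(a+b,a-1)`, with the convention
`C(m,-1) = 0` (case `a = 0`). -/
def ballotZ (a b : ℕ) : ℤ :=
  (a + b).choose a - (if a = 0 then 0 else (a + b).choose (a - 1))

/-- The ballot number `f(a,b) = C(a+b,a) - C(a+b,a-1)` as a natural number,
with the convention `C(m,-1) = 0` (case `a = 0`). -/
def ballotN (a b : ℕ) : ℕ :=
  (a + b).choose a - (if a = 0 then 0 else (a + b).choose (a - 1))

/-- The Catalan number `Cat(n) = C(2n,n)/(n+1)`. -/
def CatN (n : ℕ) : ℕ := (2 * n).choose n / (n + 1)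

lemma ballot_mul (a b : ℕ) :
    ((b : ℤ) + 1) * ballotZ a b = ((b : ℤ) + 1 - a) * ((a + b).choose a : ℤ) := by
  unfold ballotZ
  rcases Nat.eq_zero_or_pos a with ha | ha
  · subst ha; simp
  · rw [if_neg (by omega)]
    have key := Nat.choose_succ_right_eq (a + b) (a - 1)
    rw [show a - 1 + 1 = a from by omega, show a + b - (a - 1) = b + 1 from by omega] at key
    have key' : ((a + b).choose a : ℤ) * a = ((a + b).choose (a - 1) : ℤ) * (b + 1) := by
      exact_mod_cast congrArg (Nat.cast : ℕ → ℤ) key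
    linear_combination key'

/-- With `x = h+1-z`, `1 ≤ z ≤ h-1`, `1 ≤ h ≤ n-1`, the quantity
`M2 - M1 = f(x-1,h-1)·f(n-h-1,n-x+1) - f(x-2,h)·f(n-h,n-x)` is nonnegative
if and only if `h + x ≤ n + 1`, equivalently `h ≤ (n+z)/2`. -/
theorem stmt5 (n h z x : ℕ) (hx : x = h + 1 - z) (hz : 1 ≤ z) (hzh : z ≤ h - 1)
    (hh : 1 ≤ h) (hhn : h ≤ n - 1) (hn : 1 ≤ n) :
    (0 ≤ ballotZ (x - 1) (h - 1) * ballotZ (n - h - 1) (n - x + 1) -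
          ballotZ (x - 2) h * ballotZ (n - h) (n - x) ↔ h + x ≤ n + 1) ∧
    (h + x ≤ n + 1 ↔ 2 * h ≤ n + z) := by
  obtain ⟨a, c, d, rfl, rfl, rfl, rfl⟩ :
      ∃ a c d, x = a + 2 ∧ h = a + c + 2 ∧ n = a + c + d + 3 ∧ z = c + 1 :=
    ⟨x - 2, h - x, n - h - 1, by omega, by omega, by omega, by omega⟩
  simp only [show a + 2 - 1 = a + 1 from by omega, show a + 2 - 2 = a from by omega,
    show a + c + 2 - 1 = a + c + 1 from by omega,
    show a + c + d + 3 - (a + c + 2) = d + 1 from by omega,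
    show d + 1 - 1 = d from by omega,
    show a + c + d + 3 - (a + 2) = c + d + 1 from by omega,
    show c + d + 1 + 1 = c + d + 2 from by omega]
  refine ⟨?_, by omega⟩
  have h1 := ballot_mul (a + 1) (a + c + 1)
  have h2 := ballot_mul d (c + d + 2)
  have h3 := ballot_mul a (a + c + 2)
  have h4 := ballot_mul (d + 1) (c + d + 1)
  rw [show a + 1 + (a + c + 1) = 2 * a + c + 2 from by ring] at h1
  rw [show d + (c + d + 2) = c + 2 * d + 2 from by ring] at h2
  rw [show a + (a + c + 2) = 2 * a + c + 2 from by ring] at h3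
  rw [show d + 1 + (c + d + 1) = c + 2 * d + 2 from by ring] at h4
  push_cast at h1 h2 h3 h4
  set f1 := ballotZ (a + 1) (a + c + 1) with hf1
  set f2 := ballotZ d (c + d + 2) with hf2
  set f3 := ballotZ a (a + c + 2) with hf3
  set f4 := ballotZ (d + 1) (c + d + 1) with hf4
  set A : ℤ := ((2 * a + c + 2).choose (a + 1) : ℤ) with hAdef
  set A' : ℤ := ((2 * a + c + 2).choose a : ℤ) with hA'def
  set B : ℤ := ((c + 2 * d + 2).choose d : ℤ) with hBdef
  set B' : ℤ := ((c + 2 * d + 2).choose (d + 1) : ℤ) with hB'def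
  have h5n := Nat.choose_succ_right_eq (2 * a + c + 2) a
  rw [show 2 * a + c + 2 - a = a + c + 2 from by omega] at h5n
  have h5 : A * ((a : ℤ) + 1) = A' * ((a : ℤ) + c + 2) := by
    rw [hAdef, hA'def]; exact_mod_cast congrArg (Nat.cast : ℕ → ℤ) h5n
  have h6n := Nat.choose_succ_right_eq (c + 2 * d + 2) d
  rw [show c + 2 * d + 2 - d = c + d + 2 from by omega] at h6n
  have h6 : B' * ((d : ℤ) + 1) = B * ((c : ℤ) + d + 2) := by
    rw [hBdef, hB'def]; exact_mod_cast congrArg (Nat.cast : ℕ → ℤ) h6n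
  have hA : (0 : ℤ) < A := by
    rw [hAdef]; exact_mod_cast Nat.choose_pos (by omega)
  have hB : (0 : ℤ) < B := by
    rw [hBdef]; exact_mod_cast Nat.choose_pos (by omega)
  have h12 : ((a : ℤ) + c + 2) * ((c : ℤ) + d + 3) * (f1 * f2)
      = ((c : ℤ) + 1) * ((c : ℤ) + 3) * (A * B) := by
    linear_combination ((c : ℤ) + d + 3) * f2 * h1 + ((c : ℤ) + 1) * A * h2
  have h34 : ((a : ℤ) + c + 3) * ((c : ℤ) + d + 2) * (f3 * f4)
      = ((c : ℤ) + 3) * ((c : ℤ) + 1) * (A' * B') := by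
    linear_combination ((c : ℤ) + d + 2) * f4 * h3 + ((c : ℤ) + 3) * A' * h4
  have key : ((a : ℤ) + c + 2) * ((a : ℤ) + c + 2) * ((c : ℤ) + d + 3) * ((a : ℤ) + c + 3)
        * ((c : ℤ) + d + 2) * ((d : ℤ) + 1) * (f1 * f2 - f3 * f4)
      = ((c : ℤ) + 1) * ((c : ℤ) + 3) * A * B * ((a : ℤ) + c + 2) * ((c : ℤ) + d + 2)
        * ((c : ℤ) + 2) * ((d : ℤ) - (a : ℤ)) := by
    linear_combination
      (((a : ℤ) + c + 3) * ((c : ℤ) + d + 2) * ((a : ℤ) + c + 2) * ((d : ℤ) + 1)) * h12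
      - (((a : ℤ) + c + 2) * ((c : ℤ) + d + 3) * ((a : ℤ) + c + 2) * ((d : ℤ) + 1)) * h34
      + (((c : ℤ) + 1) * ((c : ℤ) + 3) * ((a : ℤ) + c + 2) * ((c : ℤ) + d + 3)
          * ((c : ℤ) + d + 2) * B) * h5
      - (((c : ℤ) + 1) * ((c : ℤ) + 3) * ((a : ℤ) + c + 2) * ((a : ℤ) + c + 2)
          * ((c : ℤ) + d + 3) * A') * h6
  have hD : (0 : ℤ) < ((a : ℤ) + c + 2) * ((a : ℤ) + c + 2) * ((c : ℤ) + d + 3)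
      * ((a : ℤ) + c + 3) * ((c : ℤ) + d + 2) * ((d : ℤ) + 1) := by positivity
  have hP : (0 : ℤ) < ((c : ℤ) + 1) * ((c : ℤ) + 3) * A * B * ((a : ℤ) + c + 2)
      * ((c : ℤ) + d + 2) * ((c : ℤ) + 2) :=
    mul_pos (mul_pos (mul_pos (mul_pos (mul_pos (by positivity) hA) hB)
      (by positivity)) (by positivity)) (by positivity)
  constructor
  · intro hle
    have h0 := mul_nonneg hD.le hle
    rw [key] at h0
    have hda : (0 : ℤ) ≤ (d : ℤ) - (a : ℤ) := by
      by_contra hlt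
      push_neg at hlt
      exact absurd h0 (not_le.mpr (mul_neg_of_pos_of_neg hP hlt))
    omega
  · intro hle
    have hda : (0 : ℤ) ≤ (d : ℤ) - (a : ℤ) := by omega
    have h0 := mul_nonneg hP.le hda
    rw [← key] at h0
    exact le_of_mul_le_mul_left (by rwa [mul_zero]) hD
end

section
/- Let q_n(a,b) := f(a,b-1)·f(n-b,n-a)/Cat(n) be the probability that a uniform path in Cat(n) contains the up-step from (a,b-1) to (a,b), for 0 ≤ a ≤ b-1 and b ≤ n. Then Σ_{a=0}^{b-1} q_n(a,b) = 1 for each fixed 1 ≤ b ≤ n; equivalently Σ_{a=0}^{b-1} f(a,b-1)·f(n-b,n-a) = Cat(n). -/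
open Finset
/-!
`f = ballotN` counts the lattice paths from `(0,0)` to `(a,b)` that stay in the region `a ≤ b`,
so Pascal's rule `f(a+1,b+1) = f(a+1,b) + f(a,b+1)` holds for `a ≤ b`, and `f(a+1,a) = 0`.
Hence the hockey-stick identities `f(a,c+1) = ∑_{i ≤ a} f(i,c)` and
`f(p+1,q+1) = ∑_{p < j ≤ q+1} f(p,j)`. Put `Q(c) = ∑_{a ≤ c} f(a,c) f(n-c-1,n-a)`; expanding the
first factor of `Q(c+1)` and the second factor of `Q(c)` turns both into the same double sum
over `i ≤ a`, so `Q(c+1) = Q(c)`, while `Q(0) = f(n-1,n) = f(n,n) = Cat(n)`.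
-/

lemma Nat.choose_le_choose_succ_of_le {a b : ℕ} (h : a ≤ b) :
    (a + b + 1).choose a ≤ (a + b + 1).choose (a + 1) := by
  rcases h.lt_or_eq with h | rfl
  · exact Nat.choose_le_succ_of_lt_half_left (by omega)
  · rw [show a + a + 1 = 2 * a + 1 by ring, Nat.choose_symm_half]

lemma ballotN_zero_left (b : ℕ) : ballotN 0 b = 1 := by
  simp [ballotN]

lemma ballotN_succ_self (a : ℕ) : ballotN (a + 1) a = 0 := by
  simp [ballotN, show a + 1 + a = 2 * a + 1 by ring, Nat.choose_symm_half]

lemma ballotN_succ_succ {a b : ℕ} (h : a ≤ b) :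
    ballotN (a + 1) (b + 1) = ballotN (a + 1) b + ballotN a (b + 1) := by
  rcases a with _ | a
  · simp [ballotN]
  · have hlo := Nat.choose_le_choose_succ_of_le (show a ≤ b + 1 by omega)
    have hhi := Nat.choose_le_choose_succ_of_le h
    simp only [ballotN, Nat.add_eq_zero_iff, one_ne_zero, and_false, if_false,
      Nat.add_sub_cancel]
    rw [show a + 1 + 1 + (b + 1) = a + b + 2 + 1 by ring, show a + 1 + 1 + b = a + b + 2 by ring,
      show a + 1 + (b + 1) = a + b + 2 by ring, Nat.choose_succ_succ' (a + b + 2) (a + 1),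
      Nat.choose_succ_succ' (a + b + 2) a]
    rw [show a + (b + 1) + 1 = a + b + 2 by ring] at hlo
    rw [show a + 1 + b + 1 = a + b + 2 by ring] at hhi
    omega

lemma ballotN_self_succ (a : ℕ) : ballotN a (a + 1) = ballotN (a + 1) (a + 1) := by
  rw [ballotN_succ_succ le_rfl, ballotN_succ_self, zero_add]

lemma ballotN_self (n : ℕ) : ballotN n n = catalan n := by
  rcases n with _ | n
  · simp [ballotN]
  · have hle : (2 * n + 2).choose n ≤ (2 * n + 2).choose (n + 1) :=
      Nat.choose_le_succ_of_lt_half_left (by omega)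
    have hsucc := Nat.choose_succ_right_eq (2 * n + 2) n
    have hcat := succ_mul_catalan_eq_centralBinom (n + 1)
    rw [Nat.centralBinom, show 2 * (n + 1) = 2 * n + 2 by ring] at hcat
    rw [show 2 * n + 2 - n = n + 2 by omega] at hsucc
    apply Nat.eq_of_mul_eq_mul_left (show 0 < n + 2 by omega)
    simp only [ballotN, Nat.add_eq_zero_iff, one_ne_zero, and_false, if_false,
      Nat.add_sub_cancel, show n + 1 + (n + 1) = 2 * n + 2 by ring]
    zify [hle] at hsucc hcat ⊢
    linear_combination hsucc - hcat

lemma catN_eq_catalan (n : ℕ) : CatN n = catalan n := by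
  rw [catalan_eq_centralBinom_div, CatN, Nat.centralBinom]

lemma catalan_pos (n : ℕ) : 0 < catalan n :=
  Nat.pos_of_mul_pos_left (succ_mul_catalan_eq_centralBinom n ▸ Nat.centralBinom_pos n)

lemma ballotN_succ_right_eq_sum {a c : ℕ} (h : a ≤ c + 1) :
    ballotN a (c + 1) = ∑ i ∈ range (a + 1), ballotN i c := by
  induction a with
  | zero => simp [ballotN_zero_left]
  | succ a ih =>
    rw [ballotN_succ_succ (by omega), ih (by omega), sum_range_succ _ (a + 1), add_comm]

lemma ballotN_succ_left_eq_sum {p q : ℕ} (h : p ≤ q) :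
    ballotN (p + 1) (q + 1) = ∑ j ∈ Ioc p (q + 1), ballotN p j := by
  induction q, h using Nat.le_induction with
  | base => rw [Nat.Ioc_succ_singleton, sum_singleton, ballotN_self_succ]
  | succ q hpq ih =>
    rw [ballotN_succ_succ (Nat.le_succ_of_le hpq), sum_Ioc_succ_top (Nat.le_succ_of_le hpq), ih]

lemma ballotN_sub_eq_sum {n c i : ℕ} (hc : c + 2 ≤ n) (hi : i ≤ c + 1) :
    ballotN (n - (c + 1)) (n - i) = ∑ a ∈ Icc i (c + 1), ballotN (n - (c + 2)) (n - a) := by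
  rw [show n - (c + 1) = n - (c + 2) + 1 by omega, show n - i = n - i - 1 + 1 by omega,
    ballotN_succ_left_eq_sum (by omega)]
  refine sum_nbij' (n - ·) (n - ·) ?_ ?_ ?_ ?_ fun j hj => ?_
  iterate 4 exact fun j hj => by simp only [mem_Ioc, mem_Icc] at hj ⊢; omega
  rw [Nat.sub_sub_self (by simp only [mem_Ioc] at hj; omega)]

lemma sum_ballotN_mul_ballotN_succ_eq {n c : ℕ} (hc : c + 2 ≤ n) :
    ∑ a ∈ range (c + 2), ballotN a (c + 1) * ballotN (n - (c + 2)) (n - a) =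
      ∑ a ∈ range (c + 1), ballotN a c * ballotN (n - (c + 1)) (n - a) := by
  calc _ = ∑ a ∈ range (c + 2), ∑ i ∈ range (a + 1),
          ballotN i c * ballotN (n - (c + 2)) (n - a) := by
        refine sum_congr rfl fun a ha => ?_
        rw [ballotN_succ_right_eq_sum (Nat.lt_succ_iff.1 (mem_range.1 ha)), sum_mul]
    _ = ∑ i ∈ range (c + 2), ∑ a ∈ Icc i (c + 1),
          ballotN i c * ballotN (n - (c + 2)) (n - a) :=
        sum_comm' (by intro a i; simp only [mem_range, mem_Icc]; omega)
    _ = ∑ i ∈ range (c + 2), ballotN i c * ballotN (n - (c + 1)) (n - i) := by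
        refine sum_congr rfl fun i hi => ?_
        rw [ballotN_sub_eq_sum hc (Nat.lt_succ_iff.1 (mem_range.1 hi)), mul_sum]
    _ = _ := by rw [sum_range_succ, ballotN_succ_self, zero_mul, add_zero]

lemma sum_ballotN_mul_ballotN_eq_catalan {n c : ℕ} (hc : c < n) :
    ∑ a ∈ range (c + 1), ballotN a c * ballotN (n - (c + 1)) (n - a) = catalan n := by
  induction c with
  | zero =>
    obtain ⟨m, rfl⟩ : ∃ m, n = m + 1 := ⟨n - 1, by omega⟩
    simp [ballotN_self_succ, ballotN_self]
  | succ c ih => rw [sum_ballotN_mul_ballotN_succ_eq hc, ih (by omega)]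

/-- For each `1 ≤ b ≤ n`, `Σ_{a=0}^{b-1} q_n(a,b) = 1`, where
`q_n(a,b) = f(a,b-1)·f(n-b,n-a)/Cat(n)`; equivalently
`Σ_{a=0}^{b-1} f(a,b-1)·f(n-b,n-a) = Cat(n)`. -/
theorem stmt11 (n b : ℕ) (hb : 1 ≤ b) (hbn : b ≤ n) :
    (∑ a ∈ Finset.range b,
        ((ballotN a (b - 1) * ballotN (n - b) (n - a) : ℕ) : ℚ) / (CatN n : ℚ)) = 1 ∧
    (∑ a ∈ Finset.range b, ballotN a (b - 1) * ballotN (n - b) (n - a)) = CatN n := by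
  obtain ⟨c, rfl⟩ : ∃ c, b = c + 1 := ⟨b - 1, by omega⟩
  rw [Nat.add_sub_cancel]
  have hsum : ∑ a ∈ range (c + 1), ballotN a c * ballotN (n - (c + 1)) (n - a) = CatN n := by
    rw [catN_eq_catalan, sum_ballotN_mul_ballotN_eq_catalan (by omega)]
  refine ⟨?_, hsum⟩
  rw [← sum_div, ← Nat.cast_sum, hsum, div_self]
  rw [catN_eq_catalan]
  exact_mod_cast (catalan_pos n).ne'
end

section
/- Define r_n(a,b) as the probability that a uniform path in Cat(n) passes through the three points (a,b-1), (a,b), (a,b+1), and p_n(a,b) as the probability it passes through (a,b). Then r_n(a,b) = p_n(a,b) · (n-b)(b-a)(b-a+2)(b+1) / ((2n-a-b)(b-a+1)²(a+b)) whenever all factors are defined and nonzero (0 < a < b < n, a+b > 0). -/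
open Finset
/-- `p_n(a,b) = f(a,b)·f(n-b,n-a)/Cat(n)`: the probability that a uniform path in
`Cat(n)` passes through `(a,b)`. -/
def pQ (n a b : ℕ) : ℚ := ((ballotN a b * ballotN (n - b) (n - a) : ℕ) : ℚ) / (CatN n : ℚ)

/-- `r_n(a,b) = f(a,b-1)·f(n-b-1,n-a)/Cat(n)`: the probability that a uniform path in
`Cat(n)` passes through `(a,b-1)`, `(a,b)` and `(a,b+1)`. -/
def rQ (n a b : ℕ) : ℚ :=
  ((ballotN a (b - 1) * ballotN (n - b - 1) (n - a) : ℕ) : ℚ) / (CatN n : ℚ)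

/-!
Both ratios come from the closed form `f(x,y) = C(x+y,x)·(y-x+1)/(y+1)` (`x ≤ y`):
lowering `b` in `f(a,b)` and lowering `n-b` in `f(n-b,n-a)` multiply by
`(b-a)(b+1)/((a+b)(b-a+1))` and `(n-b)(b-a+2)/((2n-a-b)(b-a+1))` respectively, and
`r_n(a,b)/p_n(a,b)` is the product of the two factors.
-/

lemma ballotN_cast_eq {x y : ℕ} (h : x ≤ y) :
    (ballotN x y : ℚ) = (x + y).choose x * ((y : ℚ) - x + 1) / ((y : ℚ) + 1) := by
  rcases Nat.eq_zero_or_pos x with rfl | hx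
  · simp [ballotN, div_self (by positivity : (y : ℚ) + 1 ≠ 0)]
  obtain ⟨k, rfl⟩ : ∃ k, x = k + 1 := ⟨x - 1, by omega⟩
  have hrec : (k + 1 + y).choose (k + 1) * (k + 1) = (k + 1 + y).choose k * (y + 1) := by
    rw [Nat.choose_succ_right_eq, show k + 1 + y - k = y + 1 by omega]
  have hle : (k + 1 + y).choose k ≤ (k + 1 + y).choose (k + 1) :=
    Nat.le_of_mul_le_mul_right (hrec ▸ Nat.mul_le_mul_left _ (by omega)) (Nat.succ_pos y)
  have hrecQ : ((k + 1 + y).choose (k + 1) : ℚ) * (k + 1) = (k + 1 + y).choose k * (y + 1) := by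
    exact_mod_cast hrec
  simp only [ballotN, Nat.add_one_ne_zero, if_false, Nat.add_sub_cancel, Nat.cast_sub hle]
  field_simp
  push_cast
  linear_combination hrecQ

lemma ballotN_pred_right {x y : ℕ} (h : x < y) :
    (ballotN x (y - 1) : ℚ) = ballotN x y * (((y : ℚ) - x) * (y + 1)) /
      (((x : ℚ) + y) * ((y : ℚ) - x + 1)) := by
  obtain ⟨z, rfl⟩ : ∃ z, y = z + 1 := ⟨y - 1, by omega⟩
  have hrow : ((x + z).choose x : ℚ) * (x + z + 1) = (x + z + 1).choose x * (z + 1) := by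
    have := Nat.choose_mul_succ_eq (x + z) x
    rw [show x + z + 1 - x = z + 1 by omega] at this
    exact_mod_cast this
  have hxz : (x : ℚ) ≤ z := by exact_mod_cast Nat.lt_succ_iff.mp h
  rw [ballotN_cast_eq (by omega), ballotN_cast_eq (by omega), Nat.add_sub_cancel]
  push_cast
  have : (x : ℚ) + (z + 1) ≠ 0 := by positivity
  have : (z : ℚ) + 1 - x + 1 ≠ 0 := by linarith
  field_simp
  linear_combination ((z : ℚ) - x + 1) * hrow

lemma ballotN_pred_left {x y : ℕ} (hx : 0 < x) (h : x ≤ y) :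
    (ballotN (x - 1) y : ℚ) = ballotN x y * ((x : ℚ) * ((y : ℚ) - x + 2)) /
      (((x : ℚ) + y) * ((y : ℚ) - x + 1)) := by
  obtain ⟨k, rfl⟩ : ∃ k, x = k + 1 := ⟨x - 1, by omega⟩
  have hrow : ((k : ℚ) + 1 + y) * (k + y).choose k = (k + 1 + y).choose (k + 1) * (k + 1) := by
    have := Nat.add_one_mul_choose_eq (k + y) k
    rw [show k + y + 1 = k + 1 + y by ring] at this
    exact_mod_cast this
  have hky : (k : ℚ) + 1 ≤ y := by exact_mod_cast h
  rw [ballotN_cast_eq (by omega), ballotN_cast_eq (by omega), Nat.add_sub_cancel]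
  push_cast
  have : (k : ℚ) + 1 + y ≠ 0 := by positivity
  have : (y : ℚ) - (k + 1) + 1 ≠ 0 := by linarith
  field_simp
  linear_combination ((y : ℚ) - k + 1) * hrow

lemma catN_pos (n : ℕ) : 0 < CatN n := by
  rw [catN_eq_catalan]
  refine pos_of_mul_pos_right (a := n + 1) ?_ (Nat.zero_le _)
  rw [succ_mul_catalan_eq_centralBinom]
  exact Nat.centralBinom_pos n

theorem stmt12_general (n a b : ℕ) (h2 : a < b) (h3 : b < n) :
    rQ n a b = pQ n a b *
      (((n : ℚ) - b) * ((b : ℚ) - a) * ((b : ℚ) - a + 2) * ((b : ℚ) + 1)) /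
      ((2 * (n : ℚ) - a - b) * ((b : ℚ) - a + 1) ^ 2 * ((a : ℚ) + b)) := by
  have hlower : (ballotN (n - b - 1) (n - a) : ℚ) = ballotN (n - b) (n - a) *
      (((n : ℚ) - b) * ((b : ℚ) - a + 2)) / ((2 * (n : ℚ) - a - b) * ((b : ℚ) - a + 1)) := by
    rw [ballotN_pred_left (by omega : 0 < n - b) (by omega : n - b ≤ n - a),
      Nat.cast_sub h3.le, Nat.cast_sub (h2.trans h3).le]
    congr 1 <;> ring
  have hab : (a : ℚ) < b := by exact_mod_cast h2
  have hbn : (b : ℚ) < n := by exact_mod_cast h3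
  have hcat : (CatN n : ℚ) ≠ 0 := by exact_mod_cast (catN_pos n).ne'
  have : (a : ℚ) + b ≠ 0 := by linarith [(Nat.cast_nonneg a : (0 : ℚ) ≤ a)]
  have : (b : ℚ) - a + 1 ≠ 0 := by linarith
  have : 2 * (n : ℚ) - a - b ≠ 0 := by linarith
  rw [rQ, pQ, Nat.cast_mul, Nat.cast_mul, ballotN_pred_right h2, hlower]
  field_simp

/-- `r_n(a,b) = p_n(a,b)·(n-b)(b-a)(b-a+2)(b+1)/((2n-a-b)(b-a+1)²(a+b))` for `0 < a < b < n`. -/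
theorem stmt12 (n a b : ℕ) (h1 : 0 < a) (h2 : a < b) (h3 : b < n) :
    rQ n a b = pQ n a b *
      (((n : ℚ) - b) * ((b : ℚ) - a) * ((b : ℚ) - a + 2) * ((b : ℚ) + 1)) /
      ((2 * (n : ℚ) - a - b) * ((b : ℚ) - a + 1) ^ 2 * ((a : ℚ) + b)) :=
  stmt12_general n a b h2 h3
end
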